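/- Let 𝔾=(𝕍,𝔼) be a locally finite, connected, countably infinite graph and E ⊆ 𝔼. A configuration ω ∈ (ZMod 2)^E is the restriction to E of some even configuration of 𝔾 if and only if: (i) ∂ω(v) = 0 for every vertex v incident to no edge of 𝔼∖E; and (ii) for every finite connected component C of the graph with edge set 𝔼∖E and isolated vertices removed, the number of vertices v of C with ∂ω(v) = 1 is even. Moreover, the set Ω^ξ_∅ of configurations satisfying (i) and (ii) is a closed subgroup of (ZMod 2)^E, and the pushforward of UEG_𝔾 under restriction to E equals the Haar probability measure on Ω^ξ_∅. -/

import Mathlib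

open MeasureTheory

noncomputable section

instance : MeasurableSpace (ZMod 2) := ⊤

/-- The source (mod-2 boundary) of a configuration on a set `E` of edges, at a vertex `v`:
the mod-2 number of open edges incident to `v`. -/
def srcAt {V : Type*} {E : Set (Sym2 V)} (ω : E → ZMod 2) (v : V) : ZMod 2 :=
  (Set.ncard {e : E | ω e = 1 ∧ v ∈ (e : Sym2 V)} : ZMod 2)

/-- A configuration is even (sourceless). -/
def IsEvenConf {V : Type*} {E : Set (Sym2 V)} (ω : E → ZMod 2) : Prop :=
  ∀ v : V, srcAt ω v = 0

/-- `μ` is the uniform even subgraph measure (the Haar probability measure on the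
group of even configurations): a probability measure supported on even configurations
and invariant under translation (symmetric difference) by every even configuration. -/
def IsUEG {V : Type*} (E : Set (Sym2 V)) (μ : Measure (E → ZMod 2)) : Prop :=
  IsProbabilityMeasure μ ∧ μ {ω | IsEvenConf ω} = 1 ∧
    ∀ γ : E → ZMod 2, IsEvenConf γ → Measure.map (fun ω => ω + γ) μ = μ

/-- The graph of open edges of a configuration. -/
def openGraph {V : Type*} {E : Set (Sym2 V)} (ω : E → ZMod 2) : SimpleGraph V :=
  SimpleGraph.fromEdgeSet {e : Sym2 V | ∃ h : e ∈ E, ω ⟨e, h⟩ = 1}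

/-- The connected component of `v` in the graph of open edges is infinite. -/
def PercolatesAt {V : Type*} {E : Set (Sym2 V)} (ω : E → ZMod 2) (v : V) : Prop :=
  {w : V | (openGraph ω).Reachable v w}.Infinite

/-- The hypercubic lattice `ℤ^d`. -/
def latticeGraph (d : ℕ) : SimpleGraph (Fin d → ℤ) where
  Adj u v := ∑ i, |u i - v i| = 1
  symm := ⟨fun u v h => by simpa [abs_sub_comm] using h⟩
  loopless := ⟨fun u h => by simp at h⟩

instance : TopologicalSpace (ZMod 2) := ⊥

/-- Restriction of a configuration to a smaller edge set. -/
def restrictConf {V : Type*} {E' E : Set (Sym2 V)} (h : E' ⊆ E) (ω : E → ZMod 2) :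
    E' → ZMod 2 := fun e => ω ⟨e.1, h e.2⟩

/-- The graph with edge set `𝔼 ∖ E`. -/
def fringeGraph {V : Type*} (G : SimpleGraph V) (E : Set (Sym2 V)) : SimpleGraph V :=
  SimpleGraph.fromEdgeSet (G.edgeSet \ E)

/-- The set `Ω^ξ_∅` of configurations on `E` satisfying the two boundary conditions:
(i) vertices incident to no edge of `𝔼 ∖ E` are sourceless; (ii) every finite connected
component of the graph with edge set `𝔼 ∖ E` (isolated vertices removed) carries an even
number of sources. -/
def bdryEvens {V : Type*} (G : SimpleGraph V) (E : Set (Sym2 V)) :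
    Set (E → ZMod 2) :=
  {ω | (∀ v : V, (∀ e ∈ G.edgeSet \ E, v ∉ e) → srcAt ω v = 0) ∧
    (∀ v : V, (∃ e ∈ G.edgeSet \ E, v ∈ e) →
      {w : V | (fringeGraph G E).Reachable v w}.Finite →
      Even (Set.ncard {w : V | (fringeGraph G E).Reachable v w ∧ srcAt ω w = 1}))}

/-!
Write `D = 𝔼 ∖ E`. For `η` on `𝔼` the source splits as `∂η = ∂(η|E) + ∂(η|D)`, so `ω` is the
restriction of an even configuration iff `∂ω` is the source of some configuration on `D`.
A source `∂ζ` with `ζ` on `D` is even on every finite component of `D`, since summing `∂ζ` over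
a component counts each of its edges twice. Conversely such an `f` is a source: on a finite
window `W`, join the sources of each component to one vertex of it along paths, choosing that
vertex outside `W` when the component is infinite; the image of the compact group `(ZMod 2)^D`
under the continuous map `∂` is closed, so these approximations give an exact solution.
Conditions (i) and (ii) say precisely that `∂ω` is even on the finite components of `D`, isolated
vertices being singleton components. Hence `Ω^ξ_∅` is the image of the compact group of even
configurations under the restriction homomorphism, which carries Haar measure to an invariant
probability measure on that image.
-/

instance : DiscreteTopology (ZMod 2) := ⟨rfl⟩

lemma ZMod.ite_eq_one_two (x : ZMod 2) : (if x = 1 then 1 else 0 : ZMod 2) = x := by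
  revert x; decide

lemma Pi.add_self_eq_zero_zmod_two {α : Type*} (g : α → ZMod 2) : g + g = 0 :=
  funext fun a => CharTwo.add_self_eq_zero (g a)

lemma Finset.natCast_card_filter_eq_one {α : Type*} (s : Finset α) (f : α → ZMod 2) :
    ((s.filter (f · = 1)).card : ZMod 2) = ∑ a ∈ s, f a := by
  classical
  rw [← Finset.sum_boole]
  exact Finset.sum_congr rfl fun a _ => ZMod.ite_eq_one_two (f a)

lemma IsClosed.mem_of_forall_finset_exists_eqOn {ι : Type*} {X : ι → Type*}
    [∀ i, TopologicalSpace (X i)] [∀ i, DiscreteTopology (X i)] {S : Set (∀ i, X i)}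
    (hS : IsClosed S) {f : ∀ i, X i} (h : ∀ I : Finset ι, ∃ g ∈ S, ∀ i ∈ I, g i = f i) :
    f ∈ S := by
  rw [← hS.closure_eq, mem_closure_iff_nhds]
  intro U hU
  rw [nhds_pi, Filter.mem_pi'] at hU
  obtain ⟨I, t, ht, hIU⟩ := hU
  obtain ⟨g, hgS, hgf⟩ := h I
  refine ⟨g, hIU fun i hi => ?_, hgS⟩
  rw [hgf i hi]
  exact mem_of_mem_nhds (ht i)

section Haar

variable {G : Type*} [AddCommGroup G] [TopologicalSpace G] [IsTopologicalAddGroup G]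
  [CompactSpace G] [MeasurableSpace G] [BorelSpace G]

theorem AddSubgroup.exists_isProbabilityMeasure_forall_map_add_eq (S : AddSubgroup G)
    (hS : IsClosed (S : Set G)) :
    ∃ μ : Measure G, IsProbabilityMeasure μ ∧ μ S = 1 ∧
      ∀ γ ∈ S, Measure.map (fun ω => ω + γ) μ = μ := by
  have : CompactSpace S := isCompact_iff_compactSpace.mp hS.isCompact
  let ν : Measure S := Measure.addHaarMeasure ⊤
  have : IsProbabilityMeasure ν := ⟨by
    simpa using Measure.addHaarMeasure_self (K₀ := (⊤ : TopologicalSpace.PositiveCompacts S))⟩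
  refine ⟨ν.map Subtype.val, Measure.isProbabilityMeasure_map measurable_subtype_coe.aemeasurable,
    ?_, fun γ hγ => ?_⟩
  · rw [Measure.map_apply measurable_subtype_coe hS.measurableSet, Subtype.coe_preimage_self]
    exact measure_univ
  · have hcomm : (fun ω : G => ω + γ) ∘ Subtype.val = Subtype.val ∘ (fun x : S => ⟨γ, hγ⟩ + x) :=
      funext fun x => add_comm _ _
    rw [Measure.map_map (measurable_add_const γ) measurable_subtype_coe, hcomm,
      ← Measure.map_map measurable_subtype_coe (measurable_const_add _), map_add_left_eq_self]

end Haar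

section Pushforward

variable {G H : Type*} [AddGroup G] [AddGroup H] [MeasurableSpace G] [MeasurableSpace H]
  [MeasurableAdd G] [MeasurableAdd H]

lemma AddMonoidHom.map_map_add_const (φ : G →+ H) (hφ : Measurable φ) (γ : G) (μ : Measure G) :
    (μ.map φ).map (· + φ γ) = (μ.map (· + γ)).map φ := by
  rw [Measure.map_map (measurable_add_const _) hφ, Measure.map_map hφ (measurable_add_const _)]
  congr 1
  funext ω
  exact (map_add φ ω γ).symm

end Pushforward

lemma MeasureTheory.Measure.map_image_eq_one {α β : Type*} [MeasurableSpace α] [MeasurableSpace β]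
    {μ : Measure α} [IsProbabilityMeasure μ] {f : α → β} (hf : Measurable f) {s : Set α}
    (hfs : MeasurableSet (f '' s)) (hs : μ s = 1) : μ.map f (f '' s) = 1 := by
  rw [Measure.map_apply hf hfs]
  exact le_antisymm prob_le_one (hs ▸ measure_mono (Set.subset_preimage_image f s))

section Sources

variable {V : Type*}

def LocallyFiniteEdges (E : Set (Sym2 V)) : Prop :=
  ∀ v : V, {e ∈ E | v ∈ e}.Finite

variable {A B D E : Set (Sym2 V)}

lemma LocallyFiniteEdges.mono (hB : LocallyFiniteEdges B) (hA : A ⊆ B) :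
    LocallyFiniteEdges A :=
  fun v => (hB v).subset fun _ he => ⟨hA he.1, he.2⟩

lemma LocallyFiniteEdges.finite_incident (hE : LocallyFiniteEdges E) (v : V) :
    {e : E | v ∈ (e : Sym2 V)}.Finite :=
  (hE v).preimage Subtype.val_injective.injOn |>.subset fun e he => ⟨e.2, he⟩

lemma srcAt_eq_sum (hE : LocallyFiniteEdges E) (ω : E → ZMod 2) (v : V) :
    srcAt ω v = ∑ e ∈ (hE.finite_incident v).toFinset, ω e := by
  classical
  rw [← Finset.natCast_card_filter_eq_one, srcAt, ← Set.ncard_coe_finset]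
  congr 3
  ext e
  simp [and_comm]

def srcHom (hE : LocallyFiniteEdges E) : (E → ZMod 2) →+ (V → ZMod 2) where
  toFun := srcAt
  map_zero' := funext fun v => by simp [srcAt_eq_sum hE]
  map_add' ω ω' := funext fun v => by simp [srcAt_eq_sum hE, Finset.sum_add_distrib]

@[simp]
lemma srcHom_apply (hE : LocallyFiniteEdges E) (ω : E → ZMod 2) (v : V) :
    srcHom hE ω v = srcAt ω v :=
  rfl

lemma continuous_srcHom (hE : LocallyFiniteEdges E) : Continuous (srcHom hE) :=
  continuous_pi fun v => by
    simp_rw [srcHom_apply, srcAt_eq_sum hE]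
    exact continuous_finsetSum _ fun e _ => continuous_apply e

lemma srcHom_single_mk (hE : LocallyFiniteEdges E) [DecidableEq V] {u v : V}
    (huv : u ≠ v) (h : s(u, v) ∈ E) :
    srcHom hE (Pi.single ⟨s(u, v), h⟩ 1) = Pi.single u 1 + Pi.single v 1 := by
  funext w
  simp only [srcHom_apply, srcAt_eq_sum hE, Pi.add_apply, Pi.single_apply, Finset.sum_ite_eq',
    Set.Finite.mem_toFinset, Set.mem_ofPred_eq, Sym2.mem_iff]
  split_ifs <;> simp_all

end Sources

section Restriction

variable {V : Type*} {A B E : Set (Sym2 V)}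

def evenConfs (hE : LocallyFiniteEdges E) : AddSubgroup (E → ZMod 2) :=
  (srcHom hE).ker

lemma mem_evenConfs (hE : LocallyFiniteEdges E) {ω : E → ZMod 2} :
    ω ∈ evenConfs hE ↔ IsEvenConf ω := by
  simp [evenConfs, funext_iff, IsEvenConf]

lemma coe_evenConfs (hE : LocallyFiniteEdges E) :
    (evenConfs hE : Set (E → ZMod 2)) = {ω | IsEvenConf ω} :=
  Set.ext fun _ => mem_evenConfs hE

lemma isClosed_evenConfs (hE : LocallyFiniteEdges E) : IsClosed (evenConfs hE : Set (E → ZMod 2)) :=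
  isClosed_singleton.preimage (continuous_srcHom hE)

def restrictHom (h : A ⊆ B) : (B → ZMod 2) →+ (A → ZMod 2) where
  toFun := restrictConf h
  map_zero' := rfl
  map_add' _ _ := rfl

@[simp]
lemma coe_restrictHom (h : A ⊆ B) : ⇑(restrictHom h) = restrictConf h :=
  rfl

lemma continuous_restrictConf (h : A ⊆ B) : Continuous (restrictConf h) :=
  continuous_pi fun _ => continuous_apply _

lemma srcAt_eq_ncard_image (ω : E → ZMod 2) (v : V) :
    srcAt ω v = (Subtype.val '' {e : E | ω e = 1 ∧ v ∈ (e : Sym2 V)}).ncard := by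
  rw [srcAt, Set.ncard_image_of_injective _ Subtype.val_injective]

lemma srcAt_restrictConf (h : A ⊆ B) (η : B → ZMod 2) (v : V) :
    srcAt (restrictConf h η) v
      = ((Subtype.val '' {e : B | η e = 1 ∧ v ∈ (e : Sym2 V)}) ∩ A).ncard := by
  rw [srcAt_eq_ncard_image]
  congr 2
  ext x
  simp only [Set.mem_image, Set.mem_inter_iff, Set.mem_ofPred_eq, Subtype.exists,
    exists_and_right, exists_eq_right, restrictConf]
  exact ⟨fun ⟨⟨hA, h1⟩, hv⟩ => ⟨⟨⟨h hA, h1⟩, hv⟩, hA⟩, fun ⟨⟨⟨_, h1⟩, hv⟩, hA⟩ => ⟨⟨hA, h1⟩, hv⟩⟩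

lemma srcAt_eq_add_srcAt_restrictConf_diff (hB : LocallyFiniteEdges B) (h : A ⊆ B)
    (η : B → ZMod 2) (v : V) :
    srcAt η v
      = srcAt (restrictConf h η) v + srcAt (restrictConf (Set.sdiff_subset : B \ A ⊆ B) η) v := by
  set X := Subtype.val '' {e : B | η e = 1 ∧ v ∈ (e : Sym2 V)}
  have hXB : X ⊆ B := by rintro _ ⟨e, -, rfl⟩; exact e.2
  have hX : X.Finite := (hB v).subset (by rintro _ ⟨e, ⟨-, hv⟩, rfl⟩; exact ⟨e.2, hv⟩)
  have hdiff : X ∩ (B \ A) = X \ A := by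
    rw [← Set.inter_sdiff_assoc, Set.inter_eq_left.mpr hXB]
  rw [srcAt_restrictConf, srcAt_restrictConf, hdiff, srcAt_eq_ncard_image,
    ← Set.ncard_inter_add_ncard_sdiff_eq_ncard X A hX, Nat.cast_add]

lemma exists_isEvenConf_restrictConf_eq_iff (hB : LocallyFiniteEdges B) (h : A ⊆ B)
    (ω : A → ZMod 2) :
    (∃ η : B → ZMod 2, IsEvenConf η ∧ restrictConf h η = ω) ↔
      srcHom (hB.mono h) ω ∈ (srcHom (hB.mono (Set.sdiff_subset : B \ A ⊆ B))).range := by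
  constructor
  · rintro ⟨η, hη, rfl⟩
    refine ⟨restrictConf Set.sdiff_subset η, funext fun v => ?_⟩
    have hsplit := srcAt_eq_add_srcAt_restrictConf_diff hB h η v
    rw [hη v, eq_comm, CharTwo.add_eq_zero] at hsplit
    exact hsplit.symm
  · classical
    rintro ⟨ζ, hζ⟩
    let η : B → ZMod 2 := fun e =>
      if he : (e : Sym2 V) ∈ A then ω ⟨e, he⟩ else ζ ⟨e, e.2, he⟩
    have hηA : restrictConf h η = ω := funext fun e => dif_pos e.2
    have hηD : restrictConf Set.sdiff_subset η = ζ := funext fun e => dif_neg e.2.2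
    refine ⟨η, fun v => ?_, hηA⟩
    rw [srcAt_eq_add_srcAt_restrictConf_diff hB h η v, hηA, hηD,
      show srcAt ζ v = srcAt ω v from congrFun hζ v, CharTwo.add_self_eq_zero]

end Restriction

section Components

open SimpleGraph

variable {V : Type*} {D : Set (Sym2 V)}

def EvenOnFiniteComponents (R : SimpleGraph V) (f : V → ZMod 2) : Prop :=
  ∀ c : R.ConnectedComponent, c.supp.Finite → Even {v ∈ c.supp | f v = 1}.ncard

lemma sum_srcAt_eq_zero (hD : LocallyFiniteEdges D) (hdiag : ∀ e ∈ D, ¬e.IsDiag)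
    (ζ : D → ZMod 2) {C : Finset V} (hC : ∀ e ∈ D, ∀ v ∈ e, v ∈ C → ∀ w ∈ e, w ∈ C) :
    ∑ v ∈ C, srcAt ζ v = 0 := by
  classical
  set F : Finset D := C.biUnion fun v => (hD.finite_incident v).toFinset
  have hF : ∀ e ∈ F, ∀ v ∈ (e : Sym2 V), v ∈ C := by
    intro e he v hv
    obtain ⟨u, hu, hue⟩ := Finset.mem_biUnion.mp he
    exact hC e e.2 u (by simpa using hue) hu v hv
  have hsrc : ∀ v ∈ C, srcAt ζ v = ∑ e ∈ F, if v ∈ (e : Sym2 V) then ζ e else 0 := by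
    intro v hv
    rw [srcAt_eq_sum hD, ← Finset.sum_filter]
    congr 1
    ext e
    simp only [Set.Finite.mem_toFinset, Set.mem_ofPred_eq, Finset.mem_filter, F,
      Finset.mem_biUnion]
    exact ⟨fun he => ⟨⟨v, hv, he⟩, he⟩, And.right⟩
  rw [Finset.sum_congr rfl hsrc, Finset.sum_comm]
  refine Finset.sum_eq_zero fun e he => ?_
  have hends : C.filter (· ∈ (e : Sym2 V)) = (e : Sym2 V).toFinset := by
    ext v
    simpa using hF e he v
  rw [← Finset.sum_filter, Finset.sum_const, hends,
    Sym2.card_toFinset_of_not_isDiag _ (hdiag e e.2), two_nsmul, CharTwo.add_self_eq_zero]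

lemma evenOnFiniteComponents_srcAt (hD : LocallyFiniteEdges D) (hdiag : ∀ e ∈ D, ¬e.IsDiag)
    (ζ : D → ZMod 2) : EvenOnFiniteComponents (fromEdgeSet D) (srcAt ζ) := by
  classical
  intro c hc
  have hC : ∀ e ∈ D, ∀ v ∈ e, v ∈ hc.toFinset → ∀ w ∈ e, w ∈ hc.toFinset := by
    intro e he v hv hvc w hw
    rw [Set.Finite.mem_toFinset] at hvc ⊢
    by_cases hvw : v = w
    · exact hvw ▸ hvc
    · refine c.mem_supp_of_adj_mem_supp hvc ((fromEdgeSet_adj _).mpr ⟨?_, hvw⟩)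
      exact (Sym2.mem_and_mem_iff hvw).mp ⟨hv, hw⟩ ▸ he
  have hsum := sum_srcAt_eq_zero hD hdiag ζ hC
  rw [← Finset.natCast_card_filter_eq_one, ZMod.natCast_eq_zero_iff_even] at hsum
  convert hsum using 1
  rw [← Set.ncard_coe_finset]
  congr 1
  ext v
  simp

lemma single_add_single_mem_range_srcHom (hD : LocallyFiniteEdges D) [DecidableEq V] {u v : V}
    (h : (fromEdgeSet D).Reachable u v) :
    Pi.single u 1 + Pi.single v 1 ∈ (srcHom hD).range := by
  obtain ⟨p⟩ := h
  induction p with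
  | nil => rw [Pi.add_self_eq_zero_zmod_two]; exact zero_mem _
  | @cons u b v hadj p ih =>
    obtain ⟨hmem, hne⟩ := (fromEdgeSet_adj _).mp hadj
    have hedge : Pi.single u 1 + Pi.single b 1 ∈ (srcHom hD).range :=
      ⟨_, srcHom_single_mk hD hne hmem⟩
    convert add_mem hedge ih using 1
    rw [add_assoc, ← add_assoc (Pi.single b 1), Pi.add_self_eq_zero_zmod_two, zero_add]

lemma indicator_add_card_smul_single_mem_range_srcHom (hD : LocallyFiniteEdges D)
    [DecidableEq V] {S : Finset V} {r : V} (hS : ∀ v ∈ S, (fromEdgeSet D).Reachable v r) :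
    (fun w => if w ∈ S then (1 : ZMod 2) else 0) + S.card • Pi.single r 1 ∈ (srcHom hD).range := by
  have hsum : (fun w => if w ∈ S then (1 : ZMod 2) else 0) + S.card • Pi.single r 1
      = ∑ v ∈ S, (Pi.single v 1 + Pi.single r 1) := by
    rw [Finset.sum_add_distrib, Finset.sum_const]
    congr 1
    funext w
    simp [Finset.sum_apply, Finset.sum_pi_single]
  rw [hsum]
  exact sum_mem fun v hv => single_add_single_mem_range_srcHom hD (hS v hv)

lemma exists_mem_range_srcHom_eqOn_supp (hD : LocallyFiniteEdges D) {f : V → ZMod 2}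
    (hf : EvenOnFiniteComponents (fromEdgeSet D) f) (c : (fromEdgeSet D).ConnectedComponent)
    (W : Finset V) :
    ∃ g ∈ (srcHom hD).range, ∀ w ∈ W, g w = c.supp.indicator f w := by
  classical
  have hind : ∀ w, (if w ∈ c.supp ∧ f w = 1 then 1 else 0) = c.supp.indicator f w := by
    intro w
    by_cases hw : w ∈ c.supp <;> simp [hw, ZMod.ite_eq_one_two]
  by_cases hc : c.supp.Finite
  · obtain ⟨r, hr⟩ := c.nonempty_supp
    set S := hc.toFinset.filter (f · = 1)
    have hS : ∀ v ∈ S, (fromEdgeSet D).Reachable v r := fun v hv =>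
      c.reachable_of_mem_supp (by simpa [S] using (Finset.mem_filter.mp hv).1) hr
    have heven : Even S.card := by
      convert hf c hc using 1
      rw [← Set.ncard_coe_finset]
      congr 1
      ext v
      simp [S]
    refine ⟨_, indicator_add_card_smul_single_mem_range_srcHom hD hS, fun w _ => ?_⟩
    rw [Pi.add_apply, Pi.smul_apply, nsmul_eq_mul, ZMod.natCast_eq_zero_iff_even.mpr heven,
      zero_mul, add_zero, ← hind]
    simp [S]
  · obtain ⟨r, hr, hrW⟩ := Set.Infinite.exists_notMem_finset hc W
    set S := W.filter fun v => v ∈ c.supp ∧ f v = 1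
    have hS : ∀ v ∈ S, (fromEdgeSet D).Reachable v r := fun v hv =>
      c.reachable_of_mem_supp (Finset.mem_filter.mp hv).2.1 hr
    refine ⟨_, indicator_add_card_smul_single_mem_range_srcHom hD hS, fun w hw => ?_⟩
    have hwr : w ≠ r := ne_of_mem_of_not_mem hw hrW
    rw [Pi.add_apply, Pi.smul_apply, Pi.single_eq_of_ne hwr, smul_zero, add_zero, ← hind]
    simp [S, hw]

lemma exists_mem_range_srcHom_eqOn (hD : LocallyFiniteEdges D) {f : V → ZMod 2}
    (hf : EvenOnFiniteComponents (fromEdgeSet D) f) (W : Finset V) :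
    ∃ g ∈ (srcHom hD).range, ∀ w ∈ W, g w = f w := by
  classical
  choose g hg hgW using fun c => exists_mem_range_srcHom_eqOn_supp hD hf c W
  refine ⟨∑ c ∈ W.image (fromEdgeSet D).connectedComponentMk, g c,
    sum_mem fun c _ => hg c, fun w hw => ?_⟩
  rw [Finset.sum_apply, Finset.sum_congr rfl fun c _ => hgW c w hw,
    Finset.sum_eq_single_of_mem _ (Finset.mem_image_of_mem _ hw) fun c _ hc =>
      Set.indicator_of_notMem (fun hwc => hc ((c.mem_supp_iff w).mp hwc).symm) _]
  exact Set.indicator_of_mem ConnectedComponent.connectedComponentMk_mem _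

lemma mem_range_srcHom_iff (hD : LocallyFiniteEdges D) (hdiag : ∀ e ∈ D, ¬e.IsDiag)
    (f : V → ZMod 2) :
    f ∈ (srcHom hD).range ↔ EvenOnFiniteComponents (fromEdgeSet D) f := by
  refine ⟨?_, fun hf => ?_⟩
  · rintro ⟨ζ, rfl⟩
    exact evenOnFiniteComponents_srcAt hD hdiag ζ
  · have hclosed : IsClosed ((srcHom hD).range : Set (V → ZMod 2)) := by
      rw [AddMonoidHom.coe_range]
      exact (isCompact_range (continuous_srcHom hD)).isClosed
    exact hclosed.mem_of_forall_finset_exists_eqOn (exists_mem_range_srcHom_eqOn hD hf)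

end Components

section Boundary

open SimpleGraph

variable {V : Type*}

lemma eq_of_reachable_fromEdgeSet_of_forall_notMem {D : Set (Sym2 V)} {v w : V}
    (hv : ∀ e ∈ D, v ∉ e) (h : (fromEdgeSet D).Reachable v w) : v = w := by
  obtain ⟨p⟩ := h
  cases p with
  | nil => rfl
  | cons hadj _ => exact absurd (Sym2.mem_mk_left v _) (hv _ ((fromEdgeSet_adj _).mp hadj).1)

lemma setOf_reachable_eq_supp (R : SimpleGraph V) (v : V) :
    {w | R.Reachable v w} = (R.connectedComponentMk v).supp := by
  ext w
  rw [Set.mem_ofPred_eq, ConnectedComponent.mem_supp_iff, ConnectedComponent.eq, reachable_comm]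

lemma mem_bdryEvens_iff (G : SimpleGraph V) (E : Set (Sym2 V)) (ω : E → ZMod 2) :
    ω ∈ bdryEvens G E ↔ EvenOnFiniteComponents (fringeGraph G E) (srcAt ω) := by
  have hsingleton : ∀ v, (∀ e ∈ G.edgeSet \ E, v ∉ e) →
      {w | (fringeGraph G E).Reachable v w} = {v} := fun v hv => Set.ext fun w =>
    ⟨fun h => (eq_of_reachable_fromEdgeSet_of_forall_notMem hv h).symm,
      fun h => h ▸ Reachable.refl v⟩
  constructor
  · rintro ⟨hiso, hcomp⟩ c hc
    induction c using ConnectedComponent.ind with | h v => ?_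
    rw [← setOf_reachable_eq_supp] at hc ⊢
    by_cases hv : ∃ e ∈ G.edgeSet \ E, v ∈ e
    · exact hcomp v hv hc
    · push Not at hv
      rw [hsingleton v hv, Set.sep_eq_empty_iff_mem_false.mpr fun w hw h1 => by
        rw [Set.mem_singleton_iff.mp hw, hiso v hv] at h1; exact zero_ne_one h1]
      exact ⟨0, Set.ncard_empty V⟩
  · intro h
    refine ⟨fun v hv => ?_, fun v _ hfin => ?_⟩
    · rw [← ZMod.ite_eq_one_two (srcAt ω v), if_neg]
      intro h1
      have hodd := h (connectedComponentMk _ v)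
        (by rw [← setOf_reachable_eq_supp, hsingleton v hv]; exact Set.finite_singleton v)
      rw [← setOf_reachable_eq_supp, hsingleton v hv, Set.sep_eq_self_iff_mem_true.mpr
        fun w hw => Set.mem_singleton_iff.mp hw ▸ h1, Set.ncard_singleton] at hodd
      exact Nat.not_even_one hodd
    · have heven := h (connectedComponentMk _ v) (by rwa [← setOf_reachable_eq_supp])
      rwa [← setOf_reachable_eq_supp] at heven

end Boundary

lemma mem_bdryEvens_iff_exists_isEvenConf {V : Type*} {G : SimpleGraph V} {E : Set (Sym2 V)}
    (hG : LocallyFiniteEdges G.edgeSet) (hE : E ⊆ G.edgeSet) (ω : E → ZMod 2) :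
    ω ∈ bdryEvens G E ↔ ∃ η : G.edgeSet → ZMod 2, IsEvenConf η ∧ restrictConf hE η = ω := by
  rw [exists_isEvenConf_restrictConf_eq_iff hG hE,
    mem_range_srcHom_iff _ fun e he => G.not_isDiag_of_mem_edgeSet he.1, mem_bdryEvens_iff]
  rfl

lemma bdryEvens_eq_map_evenConfs {V : Type*} {G : SimpleGraph V} {E : Set (Sym2 V)}
    (hG : LocallyFiniteEdges G.edgeSet) (hE : E ⊆ G.edgeSet) :
    bdryEvens G E = (evenConfs hG).map (restrictHom hE) := by
  ext ω
  rw [mem_bdryEvens_iff_exists_isEvenConf hG hE, SetLike.mem_coe, AddSubgroup.mem_map]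
  simp only [mem_evenConfs]
  rfl

theorem ueg_marginal_is_haar_on_bdryEvens_general {V : Type} [Countable V]
    (G : SimpleGraph V)
    (hlf : ∀ v : V, {e : Sym2 V | e ∈ G.edgeSet ∧ v ∈ e}.Finite)
    (E : Set (Sym2 V)) (hE : E ⊆ G.edgeSet) :
    -- characterisation of the restrictions of even configurations
    (∀ ω : E → ZMod 2,
      ω ∈ bdryEvens G E ↔
        ∃ η : G.edgeSet → ZMod 2, IsEvenConf η ∧ restrictConf hE η = ω) ∧
    -- `Ω^ξ_∅` is a closed subgroup
    ((0 : E → ZMod 2) ∈ bdryEvens G E ∧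
      (∀ ω ∈ bdryEvens G E, ∀ ω' ∈ bdryEvens G E, ω + ω' ∈ bdryEvens G E) ∧
      (∀ ω ∈ bdryEvens G E, -ω ∈ bdryEvens G E) ∧
      IsClosed (bdryEvens G E)) ∧
    -- the pushforward of the UEG under restriction is the Haar probability measure on it
    (∃ μ, IsUEG G.edgeSet μ) ∧
    (∀ μ, IsUEG G.edgeSet μ →
      IsProbabilityMeasure (Measure.map (restrictConf hE) μ) ∧
      Measure.map (restrictConf hE) μ (bdryEvens G E) = 1 ∧
      ∀ γ ∈ bdryEvens G E,
        Measure.map (fun ω => ω + γ) (Measure.map (restrictConf hE) μ)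
          = Measure.map (restrictConf hE) μ) := by
  have hmap := bdryEvens_eq_map_evenConfs hlf hE
  have himage : bdryEvens G E = restrictConf hE '' {η | IsEvenConf η} := by
    rw [hmap, AddSubgroup.coe_map, coe_restrictHom, coe_evenConfs hlf]
  have hclosed : IsClosed (bdryEvens G E) := by
    rw [himage, ← coe_evenConfs hlf]
    exact ((isClosed_evenConfs hlf).isCompact.image (continuous_restrictConf hE)).isClosed
  have hmeas : Measurable (restrictConf hE) := (continuous_restrictConf hE).measurable
  refine ⟨mem_bdryEvens_iff_exists_isEvenConf hlf hE, ⟨?_, ?_, ?_, hclosed⟩, ?_,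
    fun μ ⟨_, hfull, hinv⟩ => ⟨Measure.isProbabilityMeasure_map hmeas.aemeasurable, ?_, ?_⟩⟩
  · rw [hmap]; exact zero_mem _
  · rw [hmap]; exact fun _ h _ h' => add_mem h h'
  · rw [hmap]; exact fun _ h => neg_mem h
  · obtain ⟨μ, hμ, hS, hinv⟩ :=
      (evenConfs hlf).exists_isProbabilityMeasure_forall_map_add_eq (isClosed_evenConfs hlf)
    exact ⟨μ, hμ, coe_evenConfs hlf ▸ hS, fun γ hγ => hinv γ ((mem_evenConfs hlf).mpr hγ)⟩
  · rw [himage] at hclosed ⊢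
    exact μ.map_image_eq_one hmeas hclosed.measurableSet hfull
  · rw [himage]
    rintro _ ⟨γ, hγ, rfl⟩
    have hcomm := (restrictHom hE).map_map_add_const hmeas γ μ
    rwa [coe_restrictHom, hinv γ hγ] at hcomm

theorem ueg_marginal_is_haar_on_bdryEvens {V : Type} [Countable V] [Infinite V]
    (G : SimpleGraph V)
    (hlf : ∀ v : V, {e : Sym2 V | e ∈ G.edgeSet ∧ v ∈ e}.Finite)
    (hconn : G.Connected)
    (E : Set (Sym2 V)) (hE : E ⊆ G.edgeSet) :
    -- characterisation of the restrictions of even configurations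
    (∀ ω : E → ZMod 2,
      ω ∈ bdryEvens G E ↔
        ∃ η : G.edgeSet → ZMod 2, IsEvenConf η ∧ restrictConf hE η = ω) ∧
    -- `Ω^ξ_∅` is a closed subgroup
    ((0 : E → ZMod 2) ∈ bdryEvens G E ∧
      (∀ ω ∈ bdryEvens G E, ∀ ω' ∈ bdryEvens G E, ω + ω' ∈ bdryEvens G E) ∧
      (∀ ω ∈ bdryEvens G E, -ω ∈ bdryEvens G E) ∧
      IsClosed (bdryEvens G E)) ∧
    -- the pushforward of the UEG under restriction is the Haar probability measure on it
    (∃ μ, IsUEG G.edgeSet μ) ∧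
    (∀ μ, IsUEG G.edgeSet μ →
      IsProbabilityMeasure (Measure.map (restrictConf hE) μ) ∧
      Measure.map (restrictConf hE) μ (bdryEvens G E) = 1 ∧
      ∀ γ ∈ bdryEvens G E,
        Measure.map (fun ω => ω + γ) (Measure.map (restrictConf hE) μ)
          = Measure.map (restrictConf hE) μ) :=
  ueg_marginal_is_haar_on_bdryEvens_general G hlf E hE
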